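/- Let ι be a finite nonempty type, let T > 0 be a real number, and let q : ι → ℝ be a probability distribution (q j ≥ 0 for all j and ∑_j q j = 1) with q j > 0 for every j. For z : ι → ℝ define the temperature-T softmax p(z) j = exp(z j / T) / ∑_k exp(z k / T), and define the distillation loss L(z) = T² · ∑_j q j · log(q j / p(z) j). Then L is differentiable at every z : ι → ℝ, and its Fréchet derivative at z is the linear map v ↦ ∑_i T · (p(z) i − q i) · v i; equivalently, the gradient of L at z is the vector T · (p(z) − q). -/

import Mathlib

open Real Finset

/-- The distillation loss `L(z) = T² · ∑ j, q j · log (q j / p(z) j)`,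
where `p(z) j = exp(z j / T) / ∑ k, exp(z k / T)` is the temperature-`T` softmax,
is differentiable at every `z`, with Fréchet derivative the linear map
`v ↦ ∑ i, T · (p(z) i − q i) · v i` (i.e. the gradient is `T · (p(z) − q)`). -/
theorem distillation_loss_hasFDerivAt
    {ι : Type*} [Fintype ι] [Nonempty ι]
    (T : ℝ) (hT : 0 < T)
    (q : ι → ℝ) (hq_nonneg : ∀ j, 0 ≤ q j) (hq_sum : ∑ j, q j = 1)
    (hq_pos : ∀ j, 0 < q j)
    (p : (ι → ℝ) → ι → ℝ)
    (hp : ∀ z j, p z j = Real.exp (z j / T) / ∑ k, Real.exp (z k / T))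
    (L : (ι → ℝ) → ℝ)
    (hL : ∀ z, L z = T ^ 2 * ∑ j, q j * Real.log (q j / p z j)) :
    ∀ z : ι → ℝ,
      DifferentiableAt ℝ L z ∧
      HasFDerivAt L
        (∑ i, (T * (p z i - q i)) •
          (ContinuousLinearMap.proj i : (ι → ℝ) →L[ℝ] ℝ)) z := by
  have hT' : T ≠ 0 := ne_of_gt hT
  set S : (ι → ℝ) → ℝ := fun w => ∑ k, Real.exp (w k / T) with hS_def
  have hS_pos : ∀ w, 0 < S w := fun w =>
    Finset.sum_pos (fun k _ => Real.exp_pos _) Finset.univ_nonempty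
  have hp_pos : ∀ w j, 0 < p w j := by
    intro w j
    rw [hp]
    exact div_pos (Real.exp_pos _) (hS_pos w)
  -- Rewrite L in closed form
  have hL' : ∀ w, L w =
      T ^ 2 * ∑ j, q j * Real.log (q j) - T * ∑ j, q j * w j
        + T ^ 2 * Real.log (S w) := by
    intro w
    rw [hL]
    have key : ∀ j, q j * Real.log (q j / p w j)
        = q j * Real.log (q j) - (T⁻¹ * (q j * w j)) + q j * Real.log (S w) := by
      intro j
      rw [Real.log_div (ne_of_gt (hq_pos j)) (ne_of_gt (hp_pos w j)), hp,
        Real.log_div (Real.exp_ne_zero _) (ne_of_gt (hS_pos w)), Real.log_exp]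
      field_simp
      ring
    rw [Finset.sum_congr rfl (fun j _ => key j), Finset.sum_add_distrib,
      Finset.sum_sub_distrib, ← Finset.mul_sum, ← Finset.sum_mul, hq_sum]
    field_simp
  intro z
  -- derivative of S
  have hSd : HasFDerivAt S
      (∑ k, (Real.exp (z k / T) / T) •
        (ContinuousLinearMap.proj k : (ι → ℝ) →L[ℝ] ℝ)) z := by
    apply HasFDerivAt.fun_sum
    intro k _
    have h1 : HasFDerivAt (fun w : ι → ℝ => w k / T)
        (T⁻¹ • (ContinuousLinearMap.proj k : (ι → ℝ) →L[ℝ] ℝ)) z := by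
      have h0 :=
        ((ContinuousLinearMap.proj k : (ι → ℝ) →L[ℝ] ℝ).hasFDerivAt (x := z)).const_smul T⁻¹
      have e : (fun w : ι → ℝ => w k / T) = T⁻¹ • ⇑(ContinuousLinearMap.proj k : (ι → ℝ) →L[ℝ] ℝ) := by
        funext w
        simp [div_eq_inv_mul]
      rw [e]
      exact h0
    have h2 := h1.exp
    refine h2.congr_fderiv ?_
    rw [smul_smul, ← div_eq_mul_inv]
  -- derivative of T^2 * log (S w)
  have hlog : HasFDerivAt (fun w => T ^ 2 * Real.log (S w))
      ((T ^ 2) • ((S z)⁻¹ • ∑ k, (Real.exp (z k / T) / T) •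
        (ContinuousLinearMap.proj k : (ι → ℝ) →L[ℝ] ℝ))) z :=
    (hSd.log (ne_of_gt (hS_pos z))).const_mul (T ^ 2)
  -- derivative of the linear part
  set A : (ι → ℝ) →L[ℝ] ℝ := ∑ j, (T * q j) •
    (ContinuousLinearMap.proj j : (ι → ℝ) →L[ℝ] ℝ) with hA_def
  have hlin : HasFDerivAt (fun w : ι → ℝ => T * ∑ j, q j * w j) A z := by
    have := A.hasFDerivAt (x := z)
    convert this using 1
    funext w
    simp [hA_def, ContinuousLinearMap.sum_apply, Finset.mul_sum, mul_assoc]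
  have hconst : HasFDerivAt (fun _ : ι → ℝ => T ^ 2 * ∑ j, q j * Real.log (q j))
      (0 : (ι → ℝ) →L[ℝ] ℝ) z := hasFDerivAt_const _ _
  have hF : HasFDerivAt L
      (((0 : (ι → ℝ) →L[ℝ] ℝ) - A) + (T ^ 2) • ((S z)⁻¹ • ∑ k, (Real.exp (z k / T) / T) •
        (ContinuousLinearMap.proj k : (ι → ℝ) →L[ℝ] ℝ))) z := by
    have : L = fun w => T ^ 2 * ∑ j, q j * Real.log (q j) - T * ∑ j, q j * w j
        + T ^ 2 * Real.log (S w) := funext hL'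
    rw [this]
    exact (hconst.sub hlin).add hlog
  have heq : (((0 : (ι → ℝ) →L[ℝ] ℝ) - A) + (T ^ 2) • ((S z)⁻¹ •
        ∑ k, (Real.exp (z k / T) / T) •
        (ContinuousLinearMap.proj k : (ι → ℝ) →L[ℝ] ℝ)))
      = ∑ i, (T * (p z i - q i)) •
        (ContinuousLinearMap.proj i : (ι → ℝ) →L[ℝ] ℝ) := by
    ext v
    simp only [ContinuousLinearMap.add_apply, ContinuousLinearMap.sub_apply,
      ContinuousLinearMap.zero_apply, ContinuousLinearMap.smul_apply,
      ContinuousLinearMap.sum_apply, ContinuousLinearMap.proj_apply,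
      smul_eq_mul, hA_def]
    rw [zero_sub, neg_add_eq_sub, Finset.mul_sum, Finset.mul_sum, ← Finset.sum_sub_distrib]
    apply Finset.sum_congr rfl
    intro i _
    rw [hp]
    have hSz : S z ≠ 0 := ne_of_gt (hS_pos z)
    field_simp
    ring
  rw [heq] at hF
  exact ⟨hF.differentiableAt, hF⟩
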